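/- arXiv:2503.01825 — 6 statements merged into one kernel-verified Lean document; each statement's English description precedes it below -/
import Mathlib

section
/- Every properly edge-coloured digraph with minimum out-degree at least d contains a rainbow directed path of length at least d/2. -/
/-- A proper edge-colouring of a digraph: no two edges with a common start-vertex and
no two edges with a common end-vertex share a colour. -/
def ProperDiColoring {V C : Type*} (E : V → V → Prop) (c : V → V → C) : Prop :=
  (∀ u v w, E u v → E u w → c u v = c u w → v = w) ∧
  (∀ u v w, E u v → E w v → c u v = c w v → u = w)

/-- A rainbow directed path of length `ℓ`: `ℓ + 1` distinct vertices, consecutive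
edges, all edge colours pairwise distinct. -/
def IsRainbowDiPath {V C : Type*} (E : V → V → Prop) (c : V → V → C) {ℓ : ℕ}
    (p : Fin (ℓ + 1) → V) : Prop :=
  Function.Injective p ∧ (∀ i : Fin ℓ, E (p i.castSucc) (p i.succ)) ∧
    Function.Injective fun i : Fin ℓ => c (p i.castSucc) (p i.succ)

/-- Every properly edge-coloured digraph with minimum out-degree at least `d`
contains a rainbow directed path of length at least `d/2`. -/
theorem stmt0 {V C : Type*} [Fintype V] [Nonempty V]
    (E : V → V → Prop) (c : V → V → C)
    (hloopless : ∀ v, ¬ E v v) (hproper : ProperDiColoring E c)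
    (d : ℕ) (hdeg : ∀ v, d ≤ {w | E v w}.ncard) :
    ∃ (ℓ : ℕ) (p : Fin (ℓ + 1) → V), IsRainbowDiPath E c p ∧ d ≤ 2 * ℓ := by
  classical
  set P : ℕ → Prop := fun n => ∃ p : Fin (n + 1) → V, IsRainbowDiPath E c p with hPdef
  have hP0 : P 0 := by
    refine ⟨fun _ => Classical.arbitrary V, ?_, fun i => i.elim0, fun i => i.elim0⟩
    intro a b _
    exact Fin.ext (by omega)
  set ℓ := Nat.findGreatest P (Fintype.card V) with hℓdef
  have hPℓ : P ℓ := Nat.findGreatest_spec (Nat.zero_le _) hP0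
  obtain ⟨p, hinj, hedge, hcol⟩ := hPℓ
  set v := p (Fin.last ℓ) with hv
  -- maximality: any out-neighbour of v not on the path repeats a colour
  have hmax : ∀ w, E v w → w ∉ Set.range p →
      ∃ i : Fin ℓ, c v w = c (p i.castSucc) (p i.succ) := by
    intro w hEw hwr
    by_contra hcolnew
    push_neg at hcolnew
    set q : Fin (ℓ + 2) → V := Fin.snoc p w with hq
    have hq1 : ∀ j : Fin (ℓ + 1), q j.castSucc = p j := fun j => Fin.snoc_castSucc ..
    have hq2 : q (Fin.last (ℓ + 1)) = w := Fin.snoc_last ..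
    have hqinj : Function.Injective q := by
      intro a b hab
      induction a using Fin.lastCases with
      | last =>
        induction b using Fin.lastCases with
        | last => rfl
        | cast b =>
          rw [hq2, hq1] at hab
          exact absurd ⟨b, hab.symm⟩ hwr
      | cast a =>
        induction b using Fin.lastCases with
        | last =>
          rw [hq2, hq1] at hab
          exact absurd ⟨a, hab⟩ hwr
        | cast b =>
          rw [hq1, hq1] at hab
          exact congrArg Fin.castSucc (hinj hab)
    have hqc : ∀ j : Fin ℓ, q (j.castSucc).castSucc = p j.castSucc := fun j => hq1 _
    have hqs : ∀ j : Fin ℓ, q (j.castSucc).succ = p j.succ := by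
      intro j
      rw [Fin.succ_castSucc, hq1]
    have hqlc : q (Fin.last ℓ).castSucc = v := hq1 _
    have hqls : q (Fin.last ℓ).succ = w := by rw [Fin.succ_last, hq2]
    have hqedge : ∀ i : Fin (ℓ + 1), E (q i.castSucc) (q i.succ) := by
      intro i
      induction i using Fin.lastCases with
      | last => rw [hqlc, hqls]; exact hEw
      | cast j => rw [hqc, hqs]; exact hedge j
    have hqcol : Function.Injective fun i : Fin (ℓ + 1) => c (q i.castSucc) (q i.succ) := by
      intro a b hab
      simp only at hab
      induction a using Fin.lastCases with
      | last =>
        induction b using Fin.lastCases with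
        | last => rfl
        | cast b =>
          rw [hqlc, hqls, hqc, hqs] at hab
          exact absurd hab (hcolnew b)
      | cast a =>
        induction b using Fin.lastCases with
        | last =>
          rw [hqlc, hqls, hqc, hqs] at hab
          exact absurd hab.symm (hcolnew a)
        | cast b =>
          rw [hqc, hqs, hqc, hqs] at hab
          exact congrArg Fin.castSucc (hcol hab)
    have hPsucc : P (ℓ + 1) := ⟨q, hqinj, hqedge, hqcol⟩
    have hcard : ℓ + 2 ≤ Fintype.card V := by
      simpa using Fintype.card_le_of_injective q hqinj
    have : ℓ + 1 ≤ ℓ := Nat.le_findGreatest (by omega) hPsucc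
    omega
  -- counting
  set A : Set V := (fun i : Fin ℓ => p i.castSucc) '' Set.univ with hA
  set B : Set V := {w | E v w ∧ ∃ i : Fin ℓ, c v w = c (p i.castSucc) (p i.succ)} with hB
  have hsub : {w | E v w} ⊆ A ∪ B := by
    intro w hw
    by_cases hr : w ∈ Set.range p
    · obtain ⟨j, hj⟩ := hr
      have hjne : j ≠ Fin.last ℓ := by
        rintro rfl
        rw [← hv] at hj
        rw [← hj] at hw
        exact hloopless v hw
      obtain ⟨k, rfl⟩ := Fin.exists_castSucc_eq.2 hjne
      exact Or.inl ⟨k, trivial, hj⟩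
    · exact Or.inr ⟨hw, hmax w hw hr⟩
  have hAcard : A.ncard ≤ ℓ := by
    calc A.ncard ≤ (Set.univ : Set (Fin ℓ)).ncard := Set.ncard_image_le Set.finite_univ
    _ = ℓ := by simp [Set.ncard_univ]
  have hBcard : B.ncard ≤ ℓ := by
    set T : Set C := (fun i : Fin ℓ => c (p i.castSucc) (p i.succ)) '' Set.univ with hT
    have h1 : B.ncard ≤ T.ncard := by
      refine Set.ncard_le_ncard_of_injOn (fun w => c v w) ?_ ?_
        (Set.Finite.image _ Set.finite_univ)
      · rintro w ⟨hEw, i, hi⟩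
        exact ⟨i, trivial, hi.symm⟩
      · rintro w ⟨hEw, -⟩ w' ⟨hEw', -⟩ hww'
        exact hproper.1 v w w' hEw hEw' hww'
    have h2 : T.ncard ≤ ℓ := by
      calc T.ncard ≤ (Set.univ : Set (Fin ℓ)).ncard := Set.ncard_image_le Set.finite_univ
      _ = ℓ := by simp [Set.ncard_univ]
    omega
  have hd : d ≤ 2 * ℓ := by
    have h1 : d ≤ {w | E v w}.ncard := hdeg v
    have h2 : {w | E v w}.ncard ≤ (A ∪ B).ncard :=
      Set.ncard_le_ncard hsub (Set.toFinite _)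
    have h3 : (A ∪ B).ncard ≤ A.ncard + B.ncard := Set.ncard_union_le A B
    omega
  exact ⟨ℓ, p, ⟨hinj, hedge, hcol⟩, hd⟩
end

section
/- Every properly edge-coloured (undirected) graph with average degree at least d contains a rainbow path of length at least d/4. -/
/-- A proper edge-colouring of an undirected graph: the colour function is symmetric on
edges, and no two edges sharing a vertex have the same colour. -/
def IsProperEdgeColoring {V C : Type*} (G : SimpleGraph V) (c : V → V → C) : Prop :=
  (∀ u v, G.Adj u v → c u v = c v u) ∧
  (∀ u v w, G.Adj u v → G.Adj u w → v ≠ w → c u v ≠ c u w)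

/-- A rainbow path of length `ℓ`: `ℓ + 1` distinct vertices, consecutive edges,
all edge colours pairwise distinct. -/
def IsRainbowPath {V C : Type*} (G : SimpleGraph V) (c : V → V → C) {ℓ : ℕ}
    (p : Fin (ℓ + 1) → V) : Prop :=
  Function.Injective p ∧ (∀ i : Fin ℓ, G.Adj (p i.castSucc) (p i.succ)) ∧
    Function.Injective fun i : Fin ℓ => c (p i.castSucc) (p i.succ)

open Finset

section Aux

variable {V C : Type*} [DecidableEq V]

private def inDeg (G : SimpleGraph V) [DecidableRel G.Adj] (S : Finset V) (v : V) : ℕ :=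
  (S.filter (G.Adj v)).card

private def ordC (G : SimpleGraph V) [DecidableRel G.Adj] (S : Finset V) : ℕ :=
  ∑ v ∈ S, inDeg G S v

private lemma inDeg_erase (G : SimpleGraph V) [DecidableRel G.Adj] (S : Finset V) (v u : V) :
    inDeg G (S.erase v) u + (if G.Adj u v ∧ v ∈ S then 1 else 0) = inDeg G S u := by
  unfold inDeg
  rw [Finset.filter_erase]
  by_cases h : G.Adj u v ∧ v ∈ S
  · have hv : v ∈ S.filter (G.Adj u) := Finset.mem_filter.mpr ⟨h.2, h.1⟩
    rw [if_pos h, Finset.card_erase_add_one hv]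
  · have hv : v ∉ S.filter (G.Adj u) := by
      intro hmem
      exact h ⟨(Finset.mem_filter.mp hmem).2, (Finset.mem_filter.mp hmem).1⟩
    rw [if_neg h, Finset.erase_eq_of_notMem hv, add_zero]

private lemma ordC_erase (G : SimpleGraph V) [DecidableRel G.Adj] {S : Finset V} {v : V}
    (hv : v ∈ S) : ordC G S = ordC G (S.erase v) + 2 * inDeg G S v := by
  unfold ordC
  rw [← Finset.sum_erase_add S _ hv]
  have h1 : ∀ u ∈ S.erase v, inDeg G S u
      = inDeg G (S.erase v) u + (if G.Adj u v then 1 else 0) := by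
    intro u _
    rw [← inDeg_erase G S v u]
    congr 1
    simp [hv]
  rw [Finset.sum_congr rfl h1, Finset.sum_add_distrib]
  have h2 : (∑ u ∈ S.erase v, if G.Adj u v then 1 else 0) = inDeg G (S.erase v) v := by
    rw [inDeg, Finset.card_filter]
    apply Finset.sum_congr rfl
    intro u _
    simp [G.adj_comm u v]
  have h3 : inDeg G (S.erase v) v = inDeg G S v := by
    unfold inDeg
    rw [Finset.filter_erase, Finset.erase_eq_of_notMem]
    simp [G.irrefl]
  rw [h2, h3]
  ring

/-- From an average-degree condition, extract a nonempty set in which every vertex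
has many neighbours. -/
private lemma exists_good_set (G : SimpleGraph V) [DecidableRel G.Adj] {d : ℝ} (hd : 0 < d) :
    ∀ (n : ℕ) (S : Finset V), S.card = n → S.Nonempty → d * S.card ≤ (ordC G S : ℝ) →
    ∃ T : Finset V, T.Nonempty ∧ ∀ v ∈ T, d ≤ 2 * (inDeg G T v : ℝ) := by
  intro n
  induction n using Nat.strong_induction_on with
  | _ n ih =>
    intro S hcard hne hord
    by_cases hall : ∀ v ∈ S, d ≤ 2 * (inDeg G S v : ℝ)
    · exact ⟨S, hne, hall⟩
    · push_neg at hall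
      obtain ⟨v, hvS, hv⟩ := hall
      have herase := ordC_erase G hvS
      have hcard1 : 1 ≤ S.card := Finset.card_pos.mpr hne
      have hcerase : ((S.erase v).card : ℝ) = (S.card : ℝ) - 1 := by
        rw [Finset.card_erase_of_mem hvS]
        push_cast [hcard1]
        ring
      have herase' : (ordC G S : ℝ) = (ordC G (S.erase v) : ℝ) + 2 * (inDeg G S v : ℝ) := by
        exact_mod_cast congrArg (Nat.cast : ℕ → ℝ) herase
      have hlt : d * ((S.erase v).card : ℝ) < (ordC G (S.erase v) : ℝ) := by
        rw [hcerase]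
        nlinarith
      have hne' : (S.erase v).Nonempty := by
        by_contra h
        rw [Finset.not_nonempty_iff_eq_empty] at h
        rw [h] at hlt
        simp [ordC] at hlt
      have hclt : (S.erase v).card < n := by
        rw [← hcard]
        exact Finset.card_erase_lt_of_mem hvS
      exact ih _ hclt _ rfl hne' (le_of_lt hlt)

/-- The greedy rainbow-path argument inside a set of min in-degree `d/2`. -/
private lemma path_in_good_set [Fintype V] (G : SimpleGraph V) [DecidableRel G.Adj]
    (c : V → V → C) (hproper : IsProperEdgeColoring G c)
    {d : ℝ} {T : Finset V} (hne : T.Nonempty)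
    (hdeg : ∀ v ∈ T, d ≤ 2 * (inDeg G T v : ℝ)) :
    ∃ (ℓ : ℕ) (p : Fin (ℓ + 1) → V), IsRainbowPath G c p ∧ d / 4 ≤ (ℓ : ℝ) := by
  classical
  obtain ⟨v0, hv0⟩ := hne
  set P : ℕ → Prop := fun ℓ =>
    ∃ p : Fin (ℓ + 1) → V, (∀ i, p i ∈ T) ∧ IsRainbowPath G c p with hPdef
  have hP0 : P 0 := by
    refine ⟨fun _ => v0, fun _ => hv0, fun a b _ => Fin.ext (by omega),
      fun i => i.elim0, fun a b _ => a.elim0⟩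
  have hbound : ∀ ℓ, P ℓ → ℓ + 1 ≤ Fintype.card V := by
    rintro ℓ ⟨p, _, hinj, _, _⟩
    simpa using Fintype.card_le_of_injective p hinj
  set N := Nat.findGreatest P (Fintype.card V) with hN
  have hPN : P N := Nat.findGreatest_spec (Nat.zero_le _) hP0
  have hnot : ¬ P (N + 1) := by
    intro h
    have h1 : N + 1 ≤ Fintype.card V := by
      have := hbound _ h
      omega
    have := Nat.le_findGreatest h1 h
    omega
  obtain ⟨p, hpT, hinj, hadj, hcol⟩ := hPN
  set v := p (Fin.last N) with hvdef
  have hvT : v ∈ T := hpT _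
  -- Every neighbour of `v` in `T` is on the path or uses a path colour.
  set A : Finset V := (Finset.univ : Finset (Fin N)).image (fun i => p i.castSucc) with hA
  set B : Finset V := (T.filter (G.Adj v)).filter
    (fun u => ∃ i : Fin N, c v u = c (p i.castSucc) (p i.succ)) with hB
  have hsub : T.filter (G.Adj v) ⊆ A ∪ B := by
    intro u hu
    by_contra hu'
    rw [Finset.mem_union] at hu'
    push_neg at hu'
    obtain ⟨huA, huB⟩ := hu'
    have huT : u ∈ T := (Finset.mem_filter.mp hu).1
    have hadjvu : G.Adj v u := (Finset.mem_filter.mp hu).2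
    have hnewcol : ∀ i : Fin N, c v u ≠ c (p i.castSucc) (p i.succ) := by
      intro i hi
      exact huB (Finset.mem_filter.mpr ⟨hu, ⟨i, hi⟩⟩)
    have hunotp : ∀ j : Fin (N + 1), u ≠ p j := by
      intro j
      induction j using Fin.lastCases with
      | last =>
        intro h
        exact G.irrefl (h ▸ hadjvu)
      | cast j =>
        intro h
        exact huA (Finset.mem_image.mpr ⟨j, Finset.mem_univ _, h.symm⟩)
    -- build the extended path
    set q : Fin (N + 2) → V := Fin.snoc p u with hq
    have hq_cast : ∀ j : Fin (N + 1), q j.castSucc = p j := fun j => by simp [hq]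
    have hq_last : q (Fin.last (N + 1)) = u := by simp [hq]
    have hqT : ∀ i, q i ∈ T := by
      intro i
      induction i using Fin.lastCases with
      | last => rw [hq_last]; exact huT
      | cast j => rw [hq_cast]; exact hpT j
    have hqinj : Function.Injective q := by
      intro a b hab
      induction a using Fin.lastCases with
      | last =>
        induction b using Fin.lastCases with
        | last => rfl
        | cast b =>
          rw [hq_last, hq_cast] at hab
          exact absurd hab (hunotp b)
      | cast a =>
        induction b using Fin.lastCases with
        | last =>
          rw [hq_last, hq_cast] at hab
          exact absurd hab.symm (hunotp a)
        | cast b =>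
          rw [hq_cast, hq_cast] at hab
          rw [hinj hab]
    have hqadj : ∀ i : Fin (N + 1), G.Adj (q i.castSucc) (q i.succ) := by
      intro i
      induction i using Fin.lastCases with
      | last =>
        rw [hq_cast, Fin.succ_last, hq_last]
        exact hadjvu
      | cast j =>
        rw [hq_cast, Fin.succ_castSucc, hq_cast]
        exact hadj j
    have hqcoleq : ∀ i : Fin (N + 1),
        c (q i.castSucc) (q i.succ)
          = if h : (i : ℕ) < N then c (p (⟨i, h⟩ : Fin N).castSucc) (p (⟨i, h⟩ : Fin N).succ)
            else c v u := by
      intro i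
      induction i using Fin.lastCases with
      | last =>
        rw [hq_cast, Fin.succ_last, hq_last, dif_neg (by simp)]
      | cast j =>
        rw [hq_cast, Fin.succ_castSucc, hq_cast, dif_pos (by simpa using j.isLt)]
        congr 2 <;> exact Fin.ext (by simp)
    have hqcol : Function.Injective fun i : Fin (N + 1) => c (q i.castSucc) (q i.succ) := by
      intro a b hab
      simp only [hqcoleq] at hab
      induction a using Fin.lastCases with
      | last =>
        induction b using Fin.lastCases with
        | last => rfl
        | cast b =>
          rw [dif_neg (by simp), dif_pos (by simpa using b.isLt)] at hab
          exact absurd hab (by simpa using hnewcol ⟨b, b.isLt⟩)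
      | cast a =>
        induction b using Fin.lastCases with
        | last =>
          rw [dif_pos (by simpa using a.isLt), dif_neg (by simp)] at hab
          exact absurd hab.symm (by simpa using hnewcol ⟨a, a.isLt⟩)
        | cast b =>
          rw [dif_pos (by simpa using a.isLt), dif_pos (by simpa using b.isLt)] at hab
          have : (⟨(a : ℕ), a.isLt⟩ : Fin N) = ⟨(b : ℕ), b.isLt⟩ := by
            apply hcol
            convert hab using 3 <;> simp [Fin.ext_iff]
          have hab' : (a : ℕ) = (b : ℕ) := by simpa [Fin.ext_iff] using this
          exact Fin.castSucc_injective _ (Fin.ext hab')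
    exact hnot ⟨q, hqT, hqinj, hqadj, hqcol⟩
  have hAcard : A.card ≤ N := le_trans (Finset.card_image_le) (by simp)
  have hBcard : B.card ≤ N := by
    have hBex : ∀ u ∈ B, ∃ i : Fin N, c v u = c (p i.castSucc) (p i.succ) := by
      intro u hu
      exact (Finset.mem_filter.mp hu).2
    by_cases hNz : N = 0
    · have hBe : B = ∅ := by
        rw [Finset.eq_empty_iff_forall_notMem]
        intro u hu
        obtain ⟨i, _⟩ := hBex u hu
        exact absurd i.isLt (by omega)
      simp [hBe]
    · have hNe : Nonempty (Fin N) := ⟨⟨0, Nat.pos_of_ne_zero hNz⟩⟩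
      set f : V → Fin N := fun u =>
        if h : ∃ i : Fin N, c v u = c (p i.castSucc) (p i.succ) then h.choose
        else Classical.arbitrary _ with hf
      have hfcard := Finset.card_le_card_of_injOn (s := B) (t := Finset.univ) f (fun u _ => Finset.mem_univ (f u)) ?_
      · simpa using hfcard
      · intro u1 hu1 u2 hu2 hfeq
        have h1 := hBex u1 hu1
        have h2 := hBex u2 hu2
        have hc1 : c v u1 = c (p (h1.choose).castSucc) (p (h1.choose).succ) := h1.choose_spec
        have hc2 : c v u2 = c (p (h2.choose).castSucc) (p (h2.choose).succ) := h2.choose_spec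
        rw [hf] at hfeq
        simp only [dif_pos h1, dif_pos h2] at hfeq
        have hcc : c v u1 = c v u2 := by rw [hc1, hc2, hfeq]
        by_contra hne12
        have hadj1 : G.Adj v u1 := (Finset.mem_filter.mp (Finset.mem_filter.mp hu1).1).2
        have hadj2 : G.Adj v u2 := (Finset.mem_filter.mp (Finset.mem_filter.mp hu2).1).2
        exact hproper.2 v u1 u2 hadj1 hadj2 hne12 hcc
  have hdegle : inDeg G T v ≤ 2 * N := by
    calc inDeg G T v ≤ (A ∪ B).card := Finset.card_le_card hsub
    _ ≤ A.card + B.card := Finset.card_union_le _ _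
    _ ≤ 2 * N := by omega
  have hdv := hdeg v hvT
  have : d ≤ 4 * N := by
    have : (inDeg G T v : ℝ) ≤ 2 * N := by exact_mod_cast hdegle
    nlinarith
  exact ⟨N, p, ⟨hinj, hadj, hcol⟩, by linarith⟩

end Aux

/-- Every properly edge-coloured graph with average degree at least `d` contains a
rainbow path of length at least `d/4`. -/
theorem stmt1 {V C : Type*} [Fintype V] [Nonempty V]
    (G : SimpleGraph V) (c : V → V → C) (hproper : IsProperEdgeColoring G c)
    (d : ℝ) (havg : d * Fintype.card V ≤ 2 * (G.edgeSet.ncard : ℝ)) :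
    ∃ (ℓ : ℕ) (p : Fin (ℓ + 1) → V), IsRainbowPath G c p ∧ d / 4 ≤ (ℓ : ℝ) := by
  classical
  rcases le_or_gt d 0 with hd | hd
  · obtain ⟨v0⟩ := ‹Nonempty V›
    exact ⟨0, fun _ => v0, ⟨fun a b _ => Fin.ext (by omega), fun i => i.elim0,
      fun a b _ => a.elim0⟩, by simpa using by linarith⟩
  · have hord : (ordC G (Finset.univ : Finset V) : ℝ) = 2 * (G.edgeSet.ncard : ℝ) := by
      have h1 : ordC G (Finset.univ : Finset V) = ∑ v, G.degree v := by
        unfold ordC inDeg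
        apply Finset.sum_congr rfl
        intro v _
        rw [SimpleGraph.degree, SimpleGraph.neighborFinset_eq_filter]
      have h2 : ∑ v, G.degree v = 2 * G.edgeFinset.card :=
        SimpleGraph.sum_degrees_eq_twice_card_edges G
      have h3 : G.edgeSet.ncard = G.edgeFinset.card := by
        rw [SimpleGraph.edgeFinset, Set.ncard_eq_toFinset_card']
      rw [h1, h2, h3]
      push_cast
      ring
    have hstart : d * ((Finset.univ : Finset V).card : ℝ)
        ≤ (ordC G (Finset.univ : Finset V) : ℝ) := by
      rw [hord, Finset.card_univ]
      exact havg
    obtain ⟨T, hTne, hTdeg⟩ := exists_good_set G hd _ (Finset.univ : Finset V) rfl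
      Finset.univ_nonempty hstart
    exact path_in_good_set G c hproper hTne hTdeg
end

section
/- Let ε ∈ (0,1) and d ∈ ℕ. Let G be a properly edge-coloured digraph with minimum out-degree at least d such that every vertex set U of size at most d satisfies e(U,U) ≤ (ε²/4)d². Then G contains a rainbow directed path of length at least (1−ε)d. -/
open Finset

section RainbowPaths

variable {V C : Type*} {E : V → V → Prop} {c : V → V → C}

structure IsRainbowList (E : V → V → Prop) (c : V → V → C) (L : List V) : Prop where
  nodup : L.Nodup
  isChain : L.IsChain E
  nodup_zipWith : (List.zipWith c L L.tail).Nodup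

namespace IsRainbowList

theorem nil : IsRainbowList E c [] :=
  ⟨List.nodup_nil, List.isChain_nil, List.nodup_nil⟩

theorem singleton (v : V) : IsRainbowList E c [v] :=
  ⟨List.nodup_singleton v, List.isChain_singleton v, List.nodup_nil⟩

theorem tail {L : List V} (h : IsRainbowList E c L) : IsRainbowList E c L.tail := by
  refine ⟨h.nodup.sublist L.tail_sublist, h.isChain.tail, ?_⟩
  rcases L with _ | ⟨v, _ | ⟨w, t⟩⟩
  · exact List.nodup_nil
  · exact List.nodup_nil
  · simpa using h.nodup_zipWith.of_cons

theorem cons {v w : V} {t : List V} (h : IsRainbowList E c (v :: t)) (hw : w ∉ v :: t)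
    (hE : E w v) (hc : c w v ∉ List.zipWith c (v :: t) t) : IsRainbowList E c (w :: v :: t) :=
  ⟨h.nodup.cons hw, List.isChain_cons_cons.mpr ⟨hE, h.isChain⟩, h.nodup_zipWith.cons hc⟩

theorem isRainbowDiPath {L : List V} {ℓ : ℕ} (h : IsRainbowList E c L) (hL : L.length = ℓ + 1) :
    IsRainbowDiPath E c fun i : Fin (ℓ + 1) => L[i.val] := by
  refine ⟨fun i j hij => Fin.ext (h.nodup.getElem_inj_iff.mp hij), fun i => ?_,
    fun i j hij => ?_⟩
  · exact List.isChain_iff_getElem.mp h.isChain i (by omega)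
  · have hlt (k : Fin ℓ) : k.val < (List.zipWith c L L.tail).length := by simp; omega
    have hcol (k : Fin ℓ) :
        c L[k.val] L[k.val + 1] = (List.zipWith c L L.tail)[k.val]'(hlt k) := by
      simp
    exact Fin.ext ((h.nodup_zipWith.getElem_inj_iff (hi := hlt i) (hj := hlt j)).mp
      (by simpa only [← hcol, Fin.val_castSucc, Fin.val_succ] using hij))

end IsRainbowList

theorem isRainbowDiPath_comp_rev_iff {ℓ : ℕ} {p : Fin (ℓ + 1) → V} :
    IsRainbowDiPath E c (p ∘ Fin.rev) ↔ IsRainbowDiPath (flip E) (flip c) p := by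
  have hcol : (fun i : Fin ℓ => c ((p ∘ Fin.rev) i.castSucc) ((p ∘ Fin.rev) i.succ)) =
      (fun i : Fin ℓ => flip c (p i.castSucc) (p i.succ)) ∘ Fin.rev := by
    ext i; simp [flip, Fin.rev_castSucc, Fin.rev_succ]
  unfold IsRainbowDiPath
  rw [hcol, Function.Injective.of_comp_iff' _ Fin.rev_bijective,
    Function.Injective.of_comp_iff' _ Fin.rev_bijective, Fin.rev_surjective.forall]
  simp [flip, Fin.rev_castSucc, Fin.rev_succ]

end RainbowPaths

section Counting

variable {V C : Type*} {E : V → V → Prop} [DecidableRel E]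

theorem card_outNbhd_le_length_add_card [Fintype V] [DecidableEq V] [DecidableEq C]
    {c : V → V → C} {v : V} {T : Finset V} {L : List C}
    (hc : ∀ w w', E v w → E v w' → c v w = c v w' → w = w')
    (hT : ∀ w, E v w → w ∉ T → c v w ∈ L) :
    #{w | E v w} ≤ L.length + #{w ∈ T | E v w} := by
  set viaUsedColour : Finset V := {w | E v w ∧ c v w ∈ L}
  have hcover : ({w | E v w} : Finset V) ⊆ viaUsedColour ∪ {w ∈ T | E v w} := by
    intro w hw
    have hw : E v w := (mem_filter.mp hw).2
    by_cases hwT : w ∈ T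
    · exact mem_union_right _ (mem_filter.mpr ⟨hwT, hw⟩)
    · exact mem_union_left _ (mem_filter.mpr ⟨mem_univ w, hw, hT w hw hwT⟩)
  have hviaUsedColour : #viaUsedColour ≤ L.length := by
    refine (card_le_card_of_injOn (c v) (t := L.toFinset) ?_ ?_).trans L.toFinset_card_le
    · intro w hw; simp_all [viaUsedColour]
    · intro w hw w' hw' hww'
      exact hc w w' (mem_filter.mp hw).2.1 (mem_filter.mp hw').2.1 hww'
  calc #({w | E v w} : Finset V) ≤ #(viaUsedColour ∪ {w ∈ T | E v w}) := card_le_card hcover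
    _ ≤ #viaUsedColour + #{w ∈ T | E v w} := card_union_le _ _
    _ ≤ _ := Nat.add_le_add_right hviaUsedColour _

theorem card_mul_le_card_filter_product {B T : Finset V} {s : ℕ} (hBT : B ⊆ T)
    (hB : ∀ b ∈ B, s ≤ #{w ∈ T | E b w}) : #B * s ≤ #{q ∈ T ×ˢ T | E q.1 q.2} :=
  calc #B * s ≤ ∑ b ∈ B, #{w ∈ T | E b w} := by simpa using card_nsmul_le_sum B _ s hB
    _ = #{q ∈ B ×ˢ T | E q.1 q.2} := by simp only [card_filter, sum_product]
    _ ≤ #{q ∈ T ×ˢ T | E q.1 q.2} :=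
        card_le_card (filter_subset_filter _ (product_subset_product_left hBT))

end Counting

section DepthFirstSearch

open Classical

variable {V C : Type*} {E : V → V → Prop} {c : V → V → C} {s : ℕ}

variable (E c s) in
/-- A state of the search: a rainbow path `R`, stored backwards so that its head is the current
endpoint, and a set `B` of discarded vertices, each with `s` out-neighbours among the visited
vertices `R ∪ B`. -/
structure IsDFSState (R : List V) (B : Finset V) : Prop where
  isRainbowList : IsRainbowList (flip E) (flip c) R
  disjoint : ∀ b ∈ B, b ∉ R
  card_lt : #B < s
  le_card_outNbhd : ∀ b ∈ B, s ≤ #{w ∈ R.toFinset ∪ B | E b w}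

namespace IsDFSState

variable {R : List V} {B : Finset V} {t : List V} {u v w : V}

theorem nil (hs : 0 < s) : IsDFSState E c s [] ∅ :=
  ⟨IsRainbowList.nil, by simp, by simpa using hs, by simp⟩

theorem restart (h : IsDFSState E c s [] B) (hu : u ∉ B) : IsDFSState E c s [u] B := by
  refine ⟨IsRainbowList.singleton u, ?_, h.card_lt, fun b hb => ?_⟩
  · rintro b hb hbu
    exact hu (List.mem_singleton.mp hbu ▸ hb)
  · refine (h.le_card_outNbhd b hb).trans (card_le_card (filter_subset_filter _ ?_))
    simp

theorem extend (h : IsDFSState E c s (v :: t) B) (hw : w ∉ (v :: t).toFinset ∪ B) (hE : E v w)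
    (hc : c v w ∉ List.zipWith (flip c) (v :: t) t) : IsDFSState E c s (w :: v :: t) B := by
  simp only [mem_union, List.mem_toFinset, not_or] at hw
  refine ⟨h.isRainbowList.cons hw.1 hE hc, fun b hb => ?_, h.card_lt, fun b hb => ?_⟩
  · intro hbR
    rcases List.mem_cons.mp hbR with rfl | hbR
    · exact hw.2 hb
    · exact h.disjoint b hb hbR
  · refine (h.le_card_outNbhd b hb).trans (card_le_card (filter_subset_filter _ ?_))
    intro x; simp_all

theorem discard (h : IsDFSState E c s (v :: t) B)
    (hv : s ≤ #{w ∈ (v :: t).toFinset ∪ B | E v w}) (hB : #B + 1 < s) :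
    IsDFSState E c s t (insert v B) := by
  have hvisited : t.toFinset ∪ insert v B = (v :: t).toFinset ∪ B := by
    rw [List.toFinset_cons, insert_union, union_insert]
  refine ⟨h.isRainbowList.tail, fun b hb => ?_, (card_insert_le v B).trans_lt hB, fun b hb => ?_⟩
  · rcases mem_insert.mp hb with rfl | hb
    · exact (List.nodup_cons.mp h.isRainbowList.nodup).1
    · exact fun hbt => h.disjoint b hb (List.mem_cons_of_mem v hbt)
  · rw [hvisited]
    rcases mem_insert.mp hb with rfl | hb
    · exact hv
    · exact h.le_card_outNbhd b hb

theorem card_visited_le {d m : ℕ} (h : IsDFSState E c s R B) (hR : R.length ≤ m)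
    (hms : m + s ≤ d + 1) : #(R.toFinset ∪ B) ≤ d := by
  have := card_union_le R.toFinset B
  have := R.toFinset_card_le
  have := h.card_lt
  omega

theorem card_add_one_lt {d : ℕ} (h : IsDFSState E c s (v :: t) B)
    (hv : s ≤ #{w ∈ (v :: t).toFinset ∪ B | E v w}) (hd : #((v :: t).toFinset ∪ B) ≤ d)
    (hsparse : ∀ U : Finset V, #U ≤ d → #{q ∈ U ×ˢ U | E q.1 q.2} < s * s) : #B + 1 < s := by
  have hvB : v ∉ B := fun hvB => h.disjoint v hvB List.mem_cons_self
  have hsub : insert v B ⊆ (v :: t).toFinset ∪ B := insert_subset (by simp) subset_union_right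
  have hnbhd : ∀ b ∈ insert v B, s ≤ #{w ∈ (v :: t).toFinset ∪ B | E b w} := by
    intro b hb
    rcases mem_insert.mp hb with rfl | hb
    · exact hv
    · exact h.le_card_outNbhd b hb
  have hmul := card_mul_le_card_filter_product hsub hnbhd
  rw [card_insert_of_notMem hvB] at hmul
  exact Nat.lt_of_mul_lt_mul_right (hmul.trans_lt (hsparse _ hd))

theorem exists_step [Fintype V] [Nonempty V] {d m : ℕ} (h : IsDFSState E c s R B)
    (hR : R.length ≤ m) (hm : 0 < m) (hms : m + s ≤ d + 1)
    (hc : ∀ u v w, E u v → E u w → c u v = c u w → v = w) (hdeg : ∀ v, d ≤ #{w | E v w})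
    (hsparse : ∀ U : Finset V, #U ≤ d → #{q ∈ U ×ˢ U | E q.1 q.2} < s * s) :
    ∃ R' B', IsDFSState E c s R' B' ∧ #(R.toFinset ∪ B) + #B < #(R'.toFinset ∪ B') + #B' := by
  rcases R with _ | ⟨v, t⟩
  · obtain ⟨u, -, hu⟩ : ∃ u ∈ univ, u ∉ B := by
      obtain ⟨v⟩ := ‹Nonempty V›
      refine exists_mem_notMem_of_card_lt_card ?_
      have := (hdeg v).trans (card_le_univ _)
      have := h.card_lt
      rw [card_univ]; omega
    exact ⟨[u], B, h.restart hu, by simp [hu]⟩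
  by_cases hext : ∃ w, E v w ∧ w ∉ (v :: t).toFinset ∪ B ∧
      c v w ∉ List.zipWith (flip c) (v :: t) t
  · obtain ⟨w, hE, hw, hcw⟩ := hext
    refine ⟨w :: v :: t, B, h.extend hw hE hcw, ?_⟩
    rw [List.toFinset_cons (a := w), insert_union, card_insert_of_notMem hw]
    omega
  · push Not at hext
    have hv : s ≤ #{w ∈ (v :: t).toFinset ∪ B | E v w} := by
      have := card_outNbhd_le_length_add_card (hc v) hext
      simp only [List.length_zipWith, List.length_cons] at hR this
      have := hdeg v
      omega
    have hB := h.card_add_one_lt hv (h.card_visited_le hR hms) hsparse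
    have hvB : v ∉ B := fun hvB => h.disjoint v hvB List.mem_cons_self
    refine ⟨t, insert v B, h.discard hv hB, ?_⟩
    rw [List.toFinset_cons, union_insert, insert_union, card_insert_of_notMem hvB]
    omega

end IsDFSState

variable [Fintype V] {d m : ℕ}

theorem exists_isDFSState_lt_length [Nonempty V] (hm : 0 < m) (hms : m + s ≤ d + 1)
    (hc : ∀ u v w, E u v → E u w → c u v = c u w → v = w) (hdeg : ∀ v, d ≤ #{w | E v w})
    (hsparse : ∀ U : Finset V, #U ≤ d → #{q ∈ U ×ˢ U | E q.1 q.2} < s * s) :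
    ∃ R B, IsDFSState E c s R B ∧ m < R.length := by
  have hs : 0 < s := Nat.pos_of_ne_zero (by simpa using hsparse ∅ (by simp))
  let deficit : List V × Finset V → ℕ := fun x =>
    Fintype.card V + s - (#(x.1.toFinset ∪ x.2) + #x.2)
  obtain ⟨⟨R, B⟩, hRB, hmin⟩ := (measure deficit).wf.has_min {x | IsDFSState E c s x.1 x.2}
    ⟨([], ∅), IsDFSState.nil hs⟩
  replace hRB : IsDFSState E c s R B := hRB
  refine ⟨R, B, hRB, ?_⟩
  by_contra! hR
  obtain ⟨R', B', h', hlt⟩ := IsDFSState.exists_step hRB hR hm hms hc hdeg hsparse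
  have := h'.card_lt
  have := card_le_univ (R'.toFinset ∪ B')
  exact hmin (R', B') h' (show deficit (R', B') < deficit (R, B) by dsimp only [deficit]; omega)

theorem exists_isRainbowDiPath_of_card_edges_lt [Nonempty V] (hms : m + s ≤ d + 1)
    (hc : ∀ u v w, E u v → E u w → c u v = c u w → v = w) (hdeg : ∀ v, d ≤ #{w | E v w})
    (hsparse : ∀ U : Finset V, #U ≤ d → #{q ∈ U ×ˢ U | E q.1 q.2} < s * s) :
    ∃ (ℓ : ℕ) (p : Fin (ℓ + 1) → V), IsRainbowDiPath E c p ∧ m ≤ ℓ := by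
  rcases Nat.eq_zero_or_pos m with rfl | hm
  · obtain ⟨v⟩ := ‹Nonempty V›
    refine ⟨0, fun _ => v, ⟨fun i j _ => Subsingleton.elim (α := Fin 1) i j, Fin.elim0, ?_⟩, le_rfl⟩
    exact fun i => i.elim0
  obtain ⟨R, B, h, hR⟩ := exists_isDFSState_lt_length hm hms hc hdeg hsparse
  refine ⟨R.length - 1, (fun i => R[i.val]) ∘ Fin.rev, ?_, by omega⟩
  exact isRainbowDiPath_comp_rev_iff.mpr (h.isRainbowList.isRainbowDiPath (by omega))

end DepthFirstSearch

theorem stmt5_general {V C : Type*} [Fintype V] [Nonempty V]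
    (ε : ℝ) (hε0 : 0 < ε) (hε1 : ε < 1) (d : ℕ)
    (E : V → V → Prop) (c : V → V → C)
    (hproper : ProperDiColoring E c)
    (hdeg : ∀ v, d ≤ {w | E v w}.ncard)
    (hsparse : ∀ U : Finset V, U.card ≤ d →
      ({q : V × V | q.1 ∈ U ∧ q.2 ∈ U ∧ E q.1 q.2}.ncard : ℝ) ≤ ε ^ 2 / 4 * d ^ 2) :
    ∃ (ℓ : ℕ) (p : Fin (ℓ + 1) → V), IsRainbowDiPath E c p ∧ (1 - ε) * d ≤ (ℓ : ℝ) := by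
  classical
  set m := ⌈(1 - ε) * d⌉₊
  have hmd : m ≤ d := Nat.ceil_le.mpr (by nlinarith)
  have hm : (m : ℝ) < (1 - ε) * d + 1 := Nat.ceil_lt_add_one (by nlinarith)
  have hs : ε ^ 2 / 4 * d ^ 2 < ((d + 1 - m : ℕ) : ℝ) * (d + 1 - m : ℕ) := by
    have hεd : 0 ≤ ε * d := by positivity
    have hgap : ε * d < ((d + 1 - m : ℕ) : ℝ) := by
      rw [Nat.cast_sub (by omega)]; push_cast; linarith
    calc ε ^ 2 / 4 * d ^ 2 ≤ (ε * d) * (ε * d) := by nlinarith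
      _ < _ := mul_self_lt_mul_self hεd hgap
  have hdeg' (v : V) : d ≤ #{w | E v w} := by
    simpa only [Set.ncard_eq_toFinset_card', Set.toFinset_ofPred] using hdeg v
  have hsparse' (U : Finset V) (hU : #U ≤ d) :
      #{q ∈ U ×ˢ U | E q.1 q.2} < (d + 1 - m) * (d + 1 - m) := by
    have hset : {q : V × V | q.1 ∈ U ∧ q.2 ∈ U ∧ E q.1 q.2} = ↑({q ∈ U ×ˢ U | E q.1 q.2}) := by
      ext q; simp [and_assoc]
    have := hsparse U hU
    rw [hset, Set.ncard_coe_finset] at this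
    exact_mod_cast this.trans_lt hs
  obtain ⟨ℓ, p, hp, hℓ⟩ :=
    exists_isRainbowDiPath_of_card_edges_lt (m := m) (by omega) hproper.1 hdeg' hsparse'
  exact ⟨ℓ, p, hp, (Nat.le_ceil _).trans (by exact_mod_cast hℓ)⟩

/-- Let `ε ∈ (0,1)` and `d ∈ ℕ`. If `G` is a properly edge-coloured digraph with
minimum out-degree at least `d` which is `(ε²/4, d)`-locally sparse (every vertex set
`U` with `|U| ≤ d` spans at most `(ε²/4)d²` edges), then `G` has a rainbow directed
path of length at least `(1-ε)d`. -/
theorem stmt5 {V C : Type*} [Fintype V] [Nonempty V]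
    (ε : ℝ) (hε0 : 0 < ε) (hε1 : ε < 1) (d : ℕ)
    (E : V → V → Prop) (c : V → V → C)
    (hloopless : ∀ v, ¬ E v v) (hproper : ProperDiColoring E c)
    (hdeg : ∀ v, d ≤ {w | E v w}.ncard)
    (hsparse : ∀ U : Finset V, U.card ≤ d →
      ({q : V × V | q.1 ∈ U ∧ q.2 ∈ U ∧ E q.1 q.2}.ncard : ℝ) ≤ ε ^ 2 / 4 * d ^ 2) :
    ∃ (ℓ : ℕ) (p : Fin (ℓ + 1) → V), IsRainbowDiPath E c p ∧ (1 - ε) * d ≤ (ℓ : ℝ) :=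
  stmt5_general ε hε0 hε1 d E c hproper hdeg hsparse
end

section
/- Let G be a properly edge-coloured digraph, and let P be a rainbow directed path in G of maximum length ℓ ending at vertex v. Then the number of out-edges of v whose colour does not appear on P is at most ℓ, and consequently ℓ ≥ δ⁺(G)/2. -/
/-!
Let `v` be the end of a longest rainbow path `P` of length `ℓ`. An out-neighbour `w` of `v`
whose colour is new to `P` cannot lie off `P`, or appending `w` would give a longer rainbow
path; nor can it be `v` itself. So it is one of the `ℓ` earlier vertices of `P`. The remaining
out-neighbours of `v` use one of the `ℓ` colours of `P`, and by properness at most one of them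
has each colour. Hence `δ⁺ ≤ 2ℓ`.
-/

lemma Fin.snoc_comp_castSucc_succ {α β : Type*} {n : ℕ} (f : α → α → β) (p : Fin (n + 1) → α)
    (w : α) :
    (fun i : Fin (n + 1) => f ((Fin.snoc p w : Fin (n + 2) → α) i.castSucc)
        ((Fin.snoc p w : Fin (n + 2) → α) i.succ)) =
      Fin.snoc (fun i : Fin n => f (p i.castSucc) (p i.succ)) (f (p (Fin.last n)) w) := by
  funext i
  induction i using Fin.lastCases with
  | last => simp [Fin.succ_last]
  | cast i => simp [-Fin.castSucc_succ, Fin.succ_castSucc]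

section RainbowPath

variable {V C : Type*} {E : V → V → Prop} {c : V → V → C}

def diPathColours (c : V → V → C) {ℓ : ℕ} (p : Fin (ℓ + 1) → V) : Set C :=
  Set.range fun i : Fin ℓ => c (p i.castSucc) (p i.succ)

lemma IsRainbowDiPath.snoc {ℓ : ℕ} {p : Fin (ℓ + 1) → V} (hp : IsRainbowDiPath E c p) {w : V}
    (hE : E (p (Fin.last ℓ)) w) (hw : w ∉ Set.range p)
    (hc : c (p (Fin.last ℓ)) w ∉ diPathColours c p) :
    IsRainbowDiPath E c (Fin.snoc p w : Fin (ℓ + 2) → V) := by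
  obtain ⟨hinj, hedge, hcol⟩ := hp
  refine ⟨Fin.snoc_injective_of_injective hinj hw, ?_, ?_⟩
  · intro i
    rw [show E _ _ = _ from congrFun (Fin.snoc_comp_castSucc_succ E p w) i]
    induction i using Fin.lastCases with
    | last => simpa using hE
    | cast i => simpa using hedge i
  · rw [Fin.snoc_comp_castSucc_succ c p w]
    exact Fin.snoc_injective_of_injective hcol hc

lemma IsRainbowDiPath.mem_range_castSucc_of_maximal (hloopless : ∀ v, ¬ E v v) {ℓ : ℕ}
    {p : Fin (ℓ + 1) → V} (hp : IsRainbowDiPath E c p)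
    (hmax : ∀ (ℓ' : ℕ) (q : Fin (ℓ' + 1) → V), IsRainbowDiPath E c q → ℓ' ≤ ℓ) {w : V}
    (hE : E (p (Fin.last ℓ)) w) (hc : c (p (Fin.last ℓ)) w ∉ diPathColours c p) :
    w ∈ Set.range (p ∘ Fin.castSucc) := by
  by_cases hw : w ∈ Set.range p
  · obtain ⟨j, rfl⟩ := hw
    induction j using Fin.lastCases with
    | last => exact absurd hE (hloopless _)
    | cast i => exact ⟨i, rfl⟩
  · have := hmax (ℓ + 1) _ (hp.snoc hE hw hc)
    omega

lemma IsRainbowDiPath.ncard_outNeighbours_newColour_le_of_maximal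
    (hloopless : ∀ v, ¬ E v v) {ℓ : ℕ} {p : Fin (ℓ + 1) → V} (hp : IsRainbowDiPath E c p)
    (hmax : ∀ (ℓ' : ℕ) (q : Fin (ℓ' + 1) → V), IsRainbowDiPath E c q → ℓ' ≤ ℓ) :
    {w | E (p (Fin.last ℓ)) w ∧ c (p (Fin.last ℓ)) w ∉ diPathColours c p}.ncard ≤ ℓ := by
  calc _ ≤ (Set.range (p ∘ Fin.castSucc)).ncard :=
        Set.ncard_le_ncard fun w hw => hp.mem_range_castSucc_of_maximal hloopless hmax hw.1 hw.2
    _ = ℓ := by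
      rw [Set.ncard_range_of_injective (hp.1.comp (Fin.castSucc_injective ℓ)), Nat.card_fin]

lemma IsRainbowDiPath.ncard_diPathColours {ℓ : ℕ} {p : Fin (ℓ + 1) → V}
    (hp : IsRainbowDiPath E c p) : (diPathColours c p).ncard = ℓ := by
  rw [diPathColours, Set.ncard_range_of_injective hp.2.2, Nat.card_fin]

lemma ProperDiColoring.ncard_outNeighbours_colour_mem_le (hproper : ProperDiColoring E c)
    (v : V) {S : Set C} (hS : S.Finite) : {w | E v w ∧ c v w ∈ S}.ncard ≤ S.ncard :=
  Set.ncard_le_ncard_of_injOn (c v) (fun _ hw => hw.2)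
    (fun _ hw _ hw' h => hproper.1 v _ _ hw.1 hw'.1 h) hS

end RainbowPath

theorem stmt6_general {V C : Type*}
    (E : V → V → Prop) (c : V → V → C)
    (hloopless : ∀ v, ¬ E v v) (hproper : ProperDiColoring E c)
    (d : ℕ) (hdeg : ∀ v, d ≤ {w | E v w}.ncard)
    (ℓ : ℕ) (p : Fin (ℓ + 1) → V) (hp : IsRainbowDiPath E c p)
    (hmax : ∀ (ℓ' : ℕ) (q : Fin (ℓ' + 1) → V), IsRainbowDiPath E c q → ℓ' ≤ ℓ) :
    {w | E (p (Fin.last ℓ)) w ∧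
        c (p (Fin.last ℓ)) w ∉
          Set.range fun i : Fin ℓ => c (p i.castSucc) (p i.succ)}.ncard ≤ ℓ ∧
      d ≤ 2 * ℓ := by
  have hnew := hp.ncard_outNeighbours_newColour_le_of_maximal hloopless hmax
  set v := p (Fin.last ℓ)
  have hold : {w | E v w ∧ c v w ∈ diPathColours c p}.ncard ≤ ℓ :=
    (hproper.ncard_outNeighbours_colour_mem_le v (Set.finite_range _)).trans_eq
      hp.ncard_diPathColours
  have hsplit : {w | E v w} =
      {w | E v w ∧ c v w ∈ diPathColours c p} ∪ {w | E v w ∧ c v w ∉ diPathColours c p} := by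
    ext w
    simp only [Set.mem_ofPred_eq, Set.mem_union]
    tauto
  refine ⟨hnew, ?_⟩
  calc d ≤ {w | E v w}.ncard := hdeg v
    _ ≤ _ := hsplit ▸ Set.ncard_union_le _ _
    _ ≤ 2 * ℓ := by omega

/-- Let `P` be a rainbow directed path of maximum length `ℓ` in a properly
edge-coloured digraph with minimum out-degree at least `d`, ending at vertex `v`.
Then the number of out-edges of `v` whose colour does not appear on `P` is at most
`ℓ`, and consequently `ℓ ≥ d/2`. -/
theorem stmt6 {V C : Type*} [Fintype V]
    (E : V → V → Prop) (c : V → V → C)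
    (hloopless : ∀ v, ¬ E v v) (hproper : ProperDiColoring E c)
    (d : ℕ) (hdeg : ∀ v, d ≤ {w | E v w}.ncard)
    (ℓ : ℕ) (p : Fin (ℓ + 1) → V) (hp : IsRainbowDiPath E c p)
    (hmax : ∀ (ℓ' : ℕ) (q : Fin (ℓ' + 1) → V), IsRainbowDiPath E c q → ℓ' ≤ ℓ) :
    {w | E (p (Fin.last ℓ)) w ∧
        c (p (Fin.last ℓ)) w ∉
          Set.range fun i : Fin ℓ => c (p i.castSucc) (p i.succ)}.ncard ≤ ℓ ∧
      d ≤ 2 * ℓ :=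
  stmt6_general E c hloopless hproper d hdeg ℓ p hp hmax
end

section
/- Let G be a properly edge-coloured graph with maximum degree at most Δ, let (P,v,U,{Q_u}) be a (d,γ)-leaky (ℓ,s,t)-mop in G, and let B ⊆ V(G)\U satisfy deg(u, B; C(G)\C(P)) ≤ Δ' for every u ∈ U. Then G contains an (ℓ, s+1, t')-mop (P, v, U', {Q'_{u'}}) with U' ∩ B = ∅ and t' ≥ (1 + (γ(d−ℓ) − Δ' − 2s)/Δ)·t − |V(P)\B|. -/
/-- An `(ℓ,s,|U|)`-mop: a rainbow path (handle) `P` of length `ℓ`, a set `U` of ends,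
and for each `u ∈ U` a strand of length `qlen u ≤ s` from the endpoint of `P` to `u`
such that the handle together with the strand (encoded as the extended path `R u`,
which restricts to `P` on its first `ℓ+1` vertices and ends at `u`) is a rainbow
path. -/
def IsMop {V C : Type*} (G : SimpleGraph V) (c : V → V → C) (ℓ s : ℕ)
    (P : Fin (ℓ + 1) → V) (U : Finset V)
    (qlen : V → ℕ) (R : (u : V) → Fin (ℓ + qlen u + 1) → V) : Prop :=
  IsRainbowPath G c P ∧
  (∀ u ∈ U, qlen u ≤ s) ∧
  (∀ u ∈ U, IsRainbowPath G c (R u)) ∧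
  (∀ u ∈ U, ∀ i : Fin (ℓ + 1), R u (Fin.castLE (by omega) i) = P i) ∧
  (∀ u ∈ U, R u (Fin.last (ℓ + qlen u)) = u)

/-- The set of colours appearing on the handle `P`. -/
def handleColors {V C : Type*} (c : V → V → C) {ℓ : ℕ} (P : Fin (ℓ + 1) → V) : Set C :=
  Set.range fun i : Fin ℓ => c (P i.castSucc) (P i.succ)

/-!
Call a leaky edge `uw` (with `u ∈ U`, `w ∉ U`, colour not on `P`) blocked if `w ∈ B`, if `w`
lies on the strand `Q_u`, or if its colour occurs on `P ∪ Q_u`. At most `Δ' + 2s` leaky edges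
at each `u` are blocked: the strand has at most `s` vertices and `s` colours, and by properness
distinct edges at `u` have distinct colours. Every other leaky edge extends `P ∪ Q_u` to a
rainbow path ending at `w`, so `w`, unless it lies on `P`, becomes an end with a strand of
length at most `s + 1`. Each vertex receives at most `Δ` edges, so the set `W` of endpoints of
unblocked edges satisfies `γ(d - ℓ)t ≤ (Δ' + 2s)t + Δ|W|`, and at most `|V(P) \ B|` of them
lie on `P`.
-/

open Finset Function

theorem Set.ncard_range_sdiff_range_le {α : Type*} {m n : ℕ} {f : Fin m → α} {g : Fin n → α}
    (hg : Injective g) (h : Set.range g ⊆ Set.range f) :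
    (Set.range f \ Set.range g).ncard ≤ m - n := by
  have hf : (Set.range f).ncard ≤ m := by
    rw [← Set.image_univ]
    exact (Set.ncard_image_le (f := f)).trans (by simp)
  rw [Set.ncard_sdiff h, Set.ncard_range_of_injective hg, Nat.card_eq_fintype_card,
    Fintype.card_fin]
  omega

theorem Finset.card_le_mul_card_of_ncard_fiber_le {ι α β : Type*} [DecidableEq α] [Finite β]
    {E : Finset ι} {T : Finset α} {f : ι → α} {g : ι → β} (hf : ∀ x ∈ E, f x ∈ T)
    (hfg : ∀ x ∈ E, ∀ y ∈ E, f x = f y → g x = g y → x = y) (S : α → Set β)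
    (hS : ∀ x ∈ E, g x ∈ S (f x)) {k : ℕ} (hk : ∀ a ∈ T, (S a).ncard ≤ k) :
    #E ≤ k * #T := by
  refine card_le_mul_card_image_of_maps_to hf k fun a ha => ?_
  rw [← Set.ncard_coe_finset]
  refine (Set.ncard_le_ncard_of_injOn g (fun x hx => ?_) (fun x hx y hy hxy => ?_)).trans (hk a ha)
  · rw [coe_filter, Set.mem_ofPred_eq] at hx
    exact hx.2 ▸ hS x hx.1
  · rw [coe_filter, Set.mem_ofPred_eq] at hx hy
    exact hfg x hx.1 y hy.1 (hx.2.trans hy.2.symm) hxy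

theorem SimpleGraph.card_le_mul_card_image_snd {V : Type*} [Finite V] [DecidableEq V]
    {G : SimpleGraph V} {Δ : ℕ} (hΔ : ∀ v, (G.neighborSet v).ncard ≤ Δ) {E : Finset (V × V)}
    (hE : ∀ q ∈ E, G.Adj q.1 q.2) : #E ≤ Δ * #(E.image Prod.snd) :=
  card_le_mul_card_of_ncard_fiber_le (g := Prod.fst) (fun _ hq => mem_image_of_mem _ hq)
    (fun _ _ _ _ h2 h1 => Prod.ext h1 h2) G.neighborSet (fun q hq => (hE q hq).symm)
    fun v _ => hΔ v

theorem Finset.card_le_card_filter_notMem_add_ncard_sdiff {α : Type*} {W : Finset α}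
    {A B : Set α} [DecidablePred (· ∈ A)] (hA : A.Finite) (hWB : ∀ w ∈ W, w ∉ B) :
    #W ≤ #(W.filter (· ∉ A)) + (A \ B).ncard := by
  rw [← card_filter_add_card_filter_not (· ∈ A), add_comm]
  gcongr
  rw [← Set.ncard_coe_finset]
  refine Set.ncard_le_ncard (fun w hw => ?_) hA.sdiff
  rw [coe_filter, Set.mem_ofPred_eq] at hw
  exact ⟨hw.2, hWB w hw.1⟩

theorem one_add_div_mul_sub_le {x a t Δ e w w' p : ℝ} (hΔ : 0 ≤ Δ) (hw'p : 0 ≤ w' + p)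
    (hx : x * t ≤ e) (he : e ≤ a * t + Δ * w) (hw : w ≤ w' + p) :
    (1 + (x - a) / Δ) * t - p ≤ t + w' := by
  suffices (x - a) / Δ * t ≤ w' + p by linarith
  rcases hΔ.eq_or_lt with rfl | hΔ
  · simpa using hw'p
  · rw [div_mul_eq_mul_div, div_le_iff₀ hΔ]
    nlinarith

section Mop

variable {V C : Type*} {G : SimpleGraph V} {c : V → V → C}

theorem IsRainbowPath.snoc {m : ℕ} {p : Fin (m + 1) → V} {w : V} (hp : IsRainbowPath G c p)
    (hw : w ∉ Set.range p) (hadj : G.Adj (p (Fin.last m)) w)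
    (hcol : c (p (Fin.last m)) w ∉ handleColors c p) :
    IsRainbowPath G c (Fin.snoc p w : Fin (m + 2) → V) := by
  obtain ⟨hinj, hadjs, hcinj⟩ := hp
  have hedges : (fun i : Fin (m + 1) =>
      c ((Fin.snoc p w : Fin (m + 2) → V) i.castSucc) ((Fin.snoc p w : Fin (m + 2) → V) i.succ)) =
      Fin.snoc (fun i : Fin m => c (p i.castSucc) (p i.succ)) (c (p (Fin.last m)) w) := by
    funext i
    cases i using Fin.lastCases <;> simp [Fin.succ_castSucc, -Fin.castSucc_succ]
  refine ⟨Fin.snoc_injective_iff.2 ⟨hinj, hw⟩, fun i => ?_, ?_⟩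
  · cases i using Fin.lastCases with
    | last => simpa using hadj
    | cast j => simpa [Fin.succ_castSucc, -Fin.castSucc_succ] using hadjs j
  · rw [hedges]
    exact Fin.snoc_injective_iff.2 ⟨hcinj, hcol⟩

def IsMopEnd (G : SimpleGraph V) (c : V → V → C) {ℓ : ℕ} (P : Fin (ℓ + 1) → V) (s : ℕ)
    (u : V) : Prop :=
  ∃ n ≤ s, ∃ r : Fin (ℓ + n + 1) → V, IsRainbowPath G c r ∧
    (∀ i : Fin (ℓ + 1), r (Fin.castLE (by omega) i) = P i) ∧ r (Fin.last (ℓ + n)) = u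

variable {ℓ s : ℕ} {P : Fin (ℓ + 1) → V} {U : Finset V} {qlen : V → ℕ}
  {R : (u : V) → Fin (ℓ + qlen u + 1) → V} {u w : V}

theorem IsMopEnd.mono {s' : ℕ} (h : IsMopEnd G c P s u) (hs : s ≤ s') :
    IsMopEnd G c P s' u :=
  let ⟨n, hn, r, hr⟩ := h
  ⟨n, hn.trans hs, r, hr⟩

theorem exists_isMop_of_isMopEnd (hP : IsRainbowPath G c P)
    (hU : ∀ u ∈ U, IsMopEnd G c P s u) :
    ∃ (qlen : V → ℕ) (R : (u : V) → Fin (ℓ + qlen u + 1) → V), IsMop G c ℓ s P U qlen R := by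
  classical
  have hends : ∀ u, ∃ (n : ℕ) (r : Fin (ℓ + n + 1) → V), u ∈ U → n ≤ s ∧
      IsRainbowPath G c r ∧ (∀ i : Fin (ℓ + 1), r (Fin.castLE (by omega) i) = P i) ∧
      r (Fin.last (ℓ + n)) = u := fun u =>
    if hu : u ∈ U then
      let ⟨n, hn, r, hr⟩ := hU u hu
      ⟨n, r, fun _ => ⟨hn, hr⟩⟩
    else ⟨0, fun _ => P 0, fun h => absurd h hu⟩
  choose qlen R hR using hends
  exact ⟨qlen, R, hP, fun u hu => (hR u hu).1, fun u hu => (hR u hu).2.1,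
    fun u hu => (hR u hu).2.2.1, fun u hu => (hR u hu).2.2.2⟩

/-- The edge `uw` cannot extend the strand `r` ending at `u` to a new end outside `B`.
Landing on the handle is not a blocking reason: such ends are discarded afterwards, at a cost
of at most `|V(P) \ B|`. -/
def ExtensionBlocked (B : Set V) (c : V → V → C) {ℓ m : ℕ} (P : Fin (ℓ + 1) → V)
    (r : Fin (m + 1) → V) (u w : V) : Prop :=
  w ∈ B ∨ w ∈ Set.range r \ Set.range P ∨ c u w ∈ handleColors c r

namespace IsMop

variable (h : IsMop G c ℓ s P U qlen R)
include h

theorem isMopEnd (hu : u ∈ U) : IsMopEnd G c P s u :=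
  ⟨qlen u, h.2.1 u hu, R u, h.2.2.1 u hu, h.2.2.2.1 u hu, h.2.2.2.2 u hu⟩

theorem isMopEnd_succ (hu : u ∈ U) (hadj : G.Adj u w) (hw : w ∉ Set.range (R u))
    (hcol : c u w ∉ handleColors c (R u)) : IsMopEnd G c P (s + 1) w := by
  obtain ⟨-, hqs, hRrb, hres, hlast⟩ := h
  refine ⟨qlen u + 1, Nat.succ_le_succ (hqs u hu), Fin.snoc (R u) w, ?_, fun i => ?_, by simp⟩
  · exact (hRrb u hu).snoc hw (by rwa [hlast u hu]) (by rwa [hlast u hu])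
  · simpa [Fin.snoc, Fin.castLE, show (i : ℕ) < ℓ + (qlen u + 1) by omega] using hres u hu i

theorem range_subset (hu : u ∈ U) : Set.range P ⊆ Set.range (R u) := by
  rintro _ ⟨i, rfl⟩
  exact ⟨_, h.2.2.2.1 u hu i⟩

theorem handleColors_subset (hu : u ∈ U) : handleColors c P ⊆ handleColors c (R u) := by
  rintro _ ⟨i, rfl⟩
  exact ⟨Fin.castLE (by omega) i,
    congrArg₂ c (h.2.2.2.1 u hu i.castSucc) (h.2.2.2.1 u hu i.succ)⟩

theorem ncard_strand_le (hu : u ∈ U) : (Set.range (R u) \ Set.range P).ncard ≤ qlen u :=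
  (Set.ncard_range_sdiff_range_le h.1.1 (h.range_subset hu)).trans (by omega)

theorem ncard_strandColors_le (hu : u ∈ U) :
    (handleColors c (R u) \ handleColors c P).ncard ≤ qlen u :=
  (Set.ncard_range_sdiff_range_le h.1.2.2 (h.handleColors_subset hu)).trans (by omega)

theorem ncard_blocked_le [Finite V] (hc : IsProperEdgeColoring G c) (hu : u ∈ U) (B : Set V) :
    {w | G.Adj u w ∧ c u w ∉ handleColors c P ∧ ExtensionBlocked B c P (R u) u w}.ncard ≤
      {w | w ∈ B ∧ G.Adj u w ∧ c u w ∉ handleColors c P}.ncard + 2 * s := by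
  have hstrand := (h.ncard_strand_le hu).trans (h.2.1 u hu)
  -- properness makes `w ↦ c u w` injective on the neighbours of `u`
  have hcolours : {w | G.Adj u w ∧ c u w ∈ handleColors c (R u) \ handleColors c P}.ncard ≤ s :=
    (Set.ncard_le_ncard_of_injOn (c u) (fun _ hw => hw.2)
      (fun w hw w' hw' hcw => by_contra fun hne => hc.2 u w w' hw.1 hw'.1 hne hcw)
      ((Set.finite_range _).sdiff)).trans ((h.ncard_strandColors_le hu).trans (h.2.1 u hu))
  calc _ ≤ ({w | w ∈ B ∧ G.Adj u w ∧ c u w ∉ handleColors c P} ∪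
        (Set.range (R u) \ Set.range P) ∪
        {w | G.Adj u w ∧ c u w ∈ handleColors c (R u) \ handleColors c P}).ncard := by
        refine Set.ncard_le_ncard ?_
        rintro w ⟨hadj, hcP, hB | hR | hcR⟩
        exacts [Or.inl (Or.inl ⟨hB, hadj, hcP⟩), Or.inl (Or.inr hR), Or.inr ⟨hadj, hcR, hcP⟩]
    _ ≤ _ := (Set.ncard_union_le _ _).trans (add_le_add_left (Set.ncard_union_le _ _) _)
    _ ≤ _ := by omega

theorem card_blocked_le [Finite V] [DecidableEq V] (hc : IsProperEdgeColoring G c) {B : Set V}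
    {Δ' : ℕ} (hB : ∀ u ∈ U, {w | w ∈ B ∧ G.Adj u w ∧ c u w ∉ handleColors c P}.ncard ≤ Δ')
    {E : Finset (V × V)} (hE : ∀ q ∈ E, q.1 ∈ U ∧ G.Adj q.1 q.2 ∧
      c q.1 q.2 ∉ handleColors c P ∧ ExtensionBlocked B c P (R q.1) q.1 q.2) :
    #E ≤ (Δ' + 2 * s) * #U :=
  card_le_mul_card_of_ncard_fiber_le (g := Prod.snd) (fun q hq => (hE q hq).1)
    (fun _ _ _ _ => Prod.ext)
    (fun u => {w | G.Adj u w ∧ c u w ∉ handleColors c P ∧ ExtensionBlocked B c P (R u) u w})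
    (fun q hq => (hE q hq).2) fun u hu => (h.ncard_blocked_le hc hu B).trans (by
      have := hB u hu; omega)

theorem exists_ends_of_leaky [Fintype V] (hc : IsProperEdgeColoring G c) {Δ Δ' : ℕ}
    (hΔ : ∀ v, (G.neighborSet v).ncard ≤ Δ) {B : Set V}
    (hB : ∀ u ∈ U, {w | w ∈ B ∧ G.Adj u w ∧ c u w ∉ handleColors c P}.ncard ≤ Δ') :
    ∃ W : Finset V, (∀ w ∈ W, w ∉ U ∧ w ∉ B ∧ (w ∉ Set.range P → IsMopEnd G c P (s + 1) w)) ∧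
      {q : V × V | q.1 ∈ U ∧ q.2 ∉ U ∧ G.Adj q.1 q.2 ∧ c q.1 q.2 ∉ handleColors c P}.ncard ≤
        (Δ' + 2 * s) * #U + Δ * #W := by
  classical
  set E := {q : V × V | q.1 ∈ U ∧ q.2 ∉ U ∧ G.Adj q.1 q.2 ∧
    c q.1 q.2 ∉ handleColors c P}.toFinset
  have hE : ∀ q ∈ E, q.1 ∈ U ∧ q.2 ∉ U ∧ G.Adj q.1 q.2 ∧ c q.1 q.2 ∉ handleColors c P :=
    fun q hq => by simpa [E] using hq
  set blocked : V × V → Prop := fun q => ExtensionBlocked B c P (R q.1) q.1 q.2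
  refine ⟨(E.filter (¬ blocked ·)).image Prod.snd, ?_, ?_⟩
  · simp only [mem_image, mem_filter]
    rintro _ ⟨⟨u, w⟩, ⟨hq, hfree⟩, rfl⟩
    obtain ⟨hu, hwU, hadj, -⟩ := hE _ hq
    refine ⟨hwU, fun hwB => hfree (Or.inl hwB), fun hwP => h.isMopEnd_succ hu hadj ?_ ?_⟩
    exacts [fun hwR => hfree (Or.inr (Or.inl ⟨hwR, hwP⟩)), fun hcR => hfree (Or.inr (Or.inr hcR))]
  · rw [Set.ncard_eq_toFinset_card', ← card_filter_add_card_filter_not blocked]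
    gcongr
    · refine h.card_blocked_le hc hB fun q hq => ?_
      obtain ⟨hqE, hblocked⟩ := mem_filter.1 hq
      obtain ⟨hq1, -, hadj, hcol⟩ := hE q hqE
      exact ⟨hq1, hadj, hcol, hblocked⟩
    · exact G.card_le_mul_card_image_snd hΔ fun q hq => (hE q (mem_filter.1 hq).1).2.2.1

end IsMop

end Mop

theorem stmt12_general {V C : Type*} [Fintype V]
    (G : SimpleGraph V) (c : V → V → C) (hproper : IsProperEdgeColoring G c)
    (d ℓ s t Δ Δ' : ℕ) (γ : ℝ)
    (hmaxdeg : ∀ v, (G.neighborSet v).ncard ≤ Δ)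
    (P : Fin (ℓ + 1) → V) (U : Finset V) (qlen : V → ℕ)
    (R : (u : V) → Fin (ℓ + qlen u + 1) → V)
    (hmop : IsMop G c ℓ s P U qlen R) (ht : U.card = t)
    (hleaky : γ * ((d : ℝ) - ℓ) * U.card ≤
      ({q : V × V | q.1 ∈ U ∧ q.2 ∉ U ∧ G.Adj q.1 q.2 ∧
          c q.1 q.2 ∉ handleColors c P}.ncard : ℝ))
    (B : Finset V) (hB : ∀ b ∈ B, b ∉ U)
    (hBdeg : ∀ u ∈ U,
      {w | w ∈ B ∧ G.Adj u w ∧ c u w ∉ handleColors c P}.ncard ≤ Δ') :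
    ∃ (U' : Finset V) (qlen' : V → ℕ) (R' : (u : V) → Fin (ℓ + qlen' u + 1) → V),
      IsMop G c ℓ (s + 1) P U' qlen' R' ∧ (∀ b ∈ B, b ∉ U') ∧
      (1 + (γ * ((d : ℝ) - ℓ) - Δ' - 2 * s) / Δ) * t
          - ((Set.range P \ ↑B).ncard : ℝ) ≤ (U'.card : ℝ) := by
  classical
  obtain ⟨W, hW, hcount⟩ := hmop.exists_ends_of_leaky hproper hmaxdeg hBdeg
  set W' := W.filter (· ∉ Set.range P)
  obtain ⟨qlen', R', hmop'⟩ := exists_isMop_of_isMopEnd (U := U ∪ W') hmop.1 fun w hw => by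
    rcases mem_union.1 hw with hwU | hwW'
    · exact (hmop.isMopEnd hwU).mono s.le_succ
    · exact (hW w (mem_filter.1 hwW').1).2.2 (mem_filter.1 hwW').2
  refine ⟨U ∪ W', qlen', R', hmop', fun b hb hbU' => ?_, ?_⟩
  · rcases mem_union.1 hbU' with hbU | hbW'
    exacts [hB b hb hbU, (hW b (mem_filter.1 hbW').1).2.1 hb]
  have hU' : #(U ∪ W') = #U + #W' :=
    card_union_of_disjoint <|
      disjoint_left.2 fun w hwU hwW' => (hW w (mem_filter.1 hwW').1).1 hwU
  have hWP := card_le_card_filter_notMem_add_ncard_sdiff (Set.finite_range P)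
    fun w hw => (hW w hw).2.1
  rw [← ht, hU', sub_sub]
  push_cast
  exact one_add_div_mul_sub_le (w := #W) (by positivity) (by positivity) hleaky
    (by exact_mod_cast hcount) (by exact_mod_cast hWP)

/-- If `(P,v,U,{Q_u})` is a `(d,γ)`-leaky `(ℓ,s,t)`-mop in a properly edge-coloured
graph of maximum degree at most `Δ`, and `B ⊆ V(G) \ U` with
`deg(u, B; C(G)\C(P)) ≤ Δ'` for every `u ∈ U`, then `G` contains an `(ℓ,s+1,t')`-mop
with the same handle, ends avoiding `B`, and
`t' ≥ (1 + (γ(d-ℓ) - Δ' - 2s)/Δ)·t - |V(P) \ B|`. -/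
theorem stmt12 {V C : Type*} [Fintype V]
    (G : SimpleGraph V) (c : V → V → C) (hproper : IsProperEdgeColoring G c)
    (d ℓ s t Δ Δ' : ℕ) (γ : ℝ) (hγ : 0 < γ)
    (hmaxdeg : ∀ v, (G.neighborSet v).ncard ≤ Δ)
    (P : Fin (ℓ + 1) → V) (U : Finset V) (qlen : V → ℕ)
    (R : (u : V) → Fin (ℓ + qlen u + 1) → V)
    (hmop : IsMop G c ℓ s P U qlen R) (ht : U.card = t)
    (hleaky : γ * ((d : ℝ) - ℓ) * U.card ≤
      ({q : V × V | q.1 ∈ U ∧ q.2 ∉ U ∧ G.Adj q.1 q.2 ∧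
          c q.1 q.2 ∉ handleColors c P}.ncard : ℝ))
    (B : Finset V) (hB : ∀ b ∈ B, b ∉ U)
    (hBdeg : ∀ u ∈ U,
      {w | w ∈ B ∧ G.Adj u w ∧ c u w ∉ handleColors c P}.ncard ≤ Δ') :
    ∃ (U' : Finset V) (qlen' : V → ℕ) (R' : (u : V) → Fin (ℓ + qlen' u + 1) → V),
      IsMop G c ℓ (s + 1) P U' qlen' R' ∧ (∀ b ∈ B, b ∉ U') ∧
      (1 + (γ * ((d : ℝ) - ℓ) - Δ' - 2 * s) / Δ) * t
          - ((Set.range P \ ↑B).ncard : ℝ) ≤ (U'.card : ℝ) :=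
  stmt12_general G c hproper d ℓ s t Δ Δ' γ hmaxdeg P U qlen R hmop ht hleaky B hB hBdeg
end

section
/- Let G be a graph, C' a set of colours, and U₀ ⊆ V(G) a nonempty set with e(U₀, U₀^c; C') < γd'|U₀| for some γ, d' > 0 with γ < 1. Let U₁ ⊆ U₀ be a minimal nonempty subset satisfying e(U₁, U₁^c; C') < γd'|U₁|. If G is properly edge-coloured and every vertex has degree at least d' in colours C', then every vertex of the graph G[U₁;C'] has degree at least (1−γ)d'/2. -/
/-- `e(A, Aᶜ; C')`: the number of edges of `G` from `A` to its complement with colour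
in `C'`, counted as ordered pairs with first coordinate in `A`. -/
noncomputable def edgesOut {V C : Type*} (G : SimpleGraph V) (c : V → V → C) (Cs : Set C)
    (A : Finset V) : ℕ :=
  {q : V × V | q.1 ∈ A ∧ q.2 ∉ A ∧ G.Adj q.1 q.2 ∧ c q.1 q.2 ∈ Cs}.ncard

/-- Let `U₁ ⊆ U₀` be a minimal nonempty set with `e(U₁, U₁ᶜ; C') < γd'|U₁|` (where
`U₀` is a nonempty set satisfying the same inequality). If the colouring is proper and
every vertex has degree at least `d'` in colours `C'`, then every vertex of `G[U₁;C']`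
has degree at least `(1-γ)d'/2`. -/
theorem stmt16 {V C : Type*} [Fintype V]
    (G : SimpleGraph V) (c : V → V → C) (Cs : Set C)
    (γ d' : ℝ) (hγ0 : 0 < γ) (hγ1 : γ < 1) (hd' : 0 < d')
    (hproper : IsProperEdgeColoring G c)
    (hdeg : ∀ v, d' ≤ ({w | G.Adj v w ∧ c v w ∈ Cs}.ncard : ℝ))
    (U₀ U₁ : Finset V) (hU₀ne : U₀.Nonempty)
    (hU₀ : (edgesOut G c Cs U₀ : ℝ) < γ * d' * U₀.card)
    (hsub : U₁ ⊆ U₀) (hU₁ne : U₁.Nonempty)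
    (hU₁ : (edgesOut G c Cs U₁ : ℝ) < γ * d' * U₁.card)
    (hmin : ∀ W ⊆ U₁, W.Nonempty → (edgesOut G c Cs W : ℝ) < γ * d' * W.card → W = U₁) :
    ∀ u ∈ U₁, (1 - γ) * d' / 2 ≤ ({w | w ∈ U₁ ∧ G.Adj u w ∧ c u w ∈ Cs}.ncard : ℝ) := by
  classical
  intro u hu
  by_contra hlt
  push_neg at hlt
  set W := U₁.erase u with hW
  set Dset : Set V := {w | w ∈ U₁ ∧ G.Adj u w ∧ c u w ∈ Cs} with hDset
  set Oset : Set V := {w | w ∉ U₁ ∧ G.Adj u w ∧ c u w ∈ Cs} with hOset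
  set A : Set (V × V) := {q | q.1 ∈ W ∧ q.2 ∉ U₁ ∧ G.Adj q.1 q.2 ∧ c q.1 q.2 ∈ Cs} with hA
  have hcsymm : ∀ a b, G.Adj a b → (c a b ∈ Cs ↔ c b a ∈ Cs) := by
    intro a b hab; rw [hproper.1 a b hab]
  have hinjB : Function.Injective (fun w : V => (w, u)) := by
    intro a b h; simpa using h
  have hinjO : Function.Injective (fun w : V => (u, w)) := by
    intro a b h; simpa using h
  -- decomposition of edgesOut W
  have hSW : {q : V × V | q.1 ∈ W ∧ q.2 ∉ W ∧ G.Adj q.1 q.2 ∧ c q.1 q.2 ∈ Cs}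
      = A ∪ (fun w => (w, u)) '' Dset := by
    ext ⟨a, b⟩
    simp only [Set.mem_setOf_eq, Set.mem_union, Set.mem_image, hA, hW, Finset.mem_erase,
      hDset, not_and]
    constructor
    · rintro ⟨ha, hb, hadj, hcol⟩
      by_cases hbU : b ∈ U₁
      · right
        have hbu : b = u := by
          by_contra h; exact (hb h) hbU
        subst hbu
        exact ⟨a, ⟨ha.2, hadj.symm, (hcsymm a b hadj).1 hcol⟩, rfl⟩
      · left; exact ⟨ha, hbU, hadj, hcol⟩
    · rintro (⟨ha, hb, hadj, hcol⟩ | ⟨w, ⟨hwU, hadj, hcol⟩, heq⟩)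
      · refine ⟨ha, fun _ h => hb h, hadj, hcol⟩
      · obtain ⟨rfl, rfl⟩ : w = a ∧ u = b := Prod.mk.injEq .. ▸ heq
        have hau : w ≠ u := fun h => G.irrefl (h ▸ hadj.symm)
        exact ⟨⟨hau, hwU⟩, fun h => absurd rfl h, hadj.symm, (hcsymm u w hadj).1 hcol⟩
  -- decomposition of edgesOut U₁
  have hS1 : {q : V × V | q.1 ∈ U₁ ∧ q.2 ∉ U₁ ∧ G.Adj q.1 q.2 ∧ c q.1 q.2 ∈ Cs}
      = A ∪ (fun w => (u, w)) '' Oset := by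
    ext ⟨a, b⟩
    simp only [Set.mem_setOf_eq, Set.mem_union, Set.mem_image, hA, hW, Finset.mem_erase,
      hOset]
    constructor
    · rintro ⟨ha, hb, hadj, hcol⟩
      by_cases hau : a = u
      · subst hau; right; exact ⟨b, ⟨hb, hadj, hcol⟩, rfl⟩
      · left; exact ⟨⟨hau, ha⟩, hb, hadj, hcol⟩
    · rintro (⟨ha, hb, hadj, hcol⟩ | ⟨w, ⟨hwU, hadj, hcol⟩, heq⟩)
      · exact ⟨ha.2, hb, hadj, hcol⟩
      · obtain ⟨rfl, rfl⟩ : u = a ∧ w = b := Prod.mk.injEq .. ▸ heq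
        exact ⟨hu, hwU, hadj, hcol⟩
  -- degree decomposition
  have hDeg : {w | G.Adj u w ∧ c u w ∈ Cs} = Dset ∪ Oset := by
    ext w
    simp only [Set.mem_setOf_eq, Set.mem_union, hDset, hOset]
    constructor
    · rintro ⟨hadj, hcol⟩
      by_cases hwU : w ∈ U₁
      · left; exact ⟨hwU, hadj, hcol⟩
      · right; exact ⟨hwU, hadj, hcol⟩
    · rintro (⟨_, hadj, hcol⟩ | ⟨_, hadj, hcol⟩) <;> exact ⟨hadj, hcol⟩
  have hdisj1 : Disjoint A ((fun w : V => (w, u)) '' Dset) := by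
    rw [Set.disjoint_left]
    rintro q hq ⟨w, hw, rfl⟩
    exact hq.2.1 hu
  have hdisj2 : Disjoint A ((fun w : V => (u, w)) '' Oset) := by
    rw [Set.disjoint_left]
    rintro q hq ⟨w, hw, rfl⟩
    exact (Finset.notMem_erase u U₁) hq.1
  have hdisj3 : Disjoint Dset Oset := by
    rw [Set.disjoint_left]
    rintro w hw hw'
    exact hw'.1 hw.1
  have c1 : edgesOut G c Cs W = A.ncard + Dset.ncard := by
    rw [edgesOut, hSW, Set.ncard_union_eq hdisj1 (Set.toFinite _) (Set.toFinite _),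
      Set.ncard_image_of_injective _ hinjB]
  have c2 : edgesOut G c Cs U₁ = A.ncard + Oset.ncard := by
    rw [edgesOut, hS1, Set.ncard_union_eq hdisj2 (Set.toFinite _) (Set.toFinite _),
      Set.ncard_image_of_injective _ hinjO]
  have c3 : {w | G.Adj u w ∧ c u w ∈ Cs}.ncard = Dset.ncard + Oset.ncard := by
    rw [hDeg, Set.ncard_union_eq hdisj3 (Set.toFinite _) (Set.toFinite _)]
  have hdu := hdeg u
  rw [c3] at hdu
  push_cast at hdu
  have hcardW : (W.card : ℝ) = (U₁.card : ℝ) - 1 := by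
    rw [hW, Finset.card_erase_of_mem hu]
    have : 1 ≤ U₁.card := Finset.card_pos.mpr hU₁ne
    push_cast [this]
    ring
  have hkey : (edgesOut G c Cs W : ℝ) < γ * d' * W.card := by
    have e1 : (edgesOut G c Cs W : ℝ) = A.ncard + Dset.ncard := by exact_mod_cast c1
    have e2 : (edgesOut G c Cs U₁ : ℝ) = A.ncard + Oset.ncard := by exact_mod_cast c2
    rw [e1, hcardW]
    rw [e2] at hU₁
    have hD : (Dset.ncard : ℝ) < (1 - γ) * d' / 2 := hlt
    nlinarith [hD, hdu, hU₁]
  rcases W.eq_empty_or_nonempty with hWe | hWne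
  · rw [hWe] at hkey
    simp at hkey
    have : (0:ℝ) ≤ edgesOut G c Cs ∅ := by positivity
    linarith
  · have hWU := hmin W (Finset.erase_subset u U₁) hWne hkey
    rw [← hWU] at hu
    exact (Finset.notMem_erase u U₁) hu
end
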